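/- arXiv:2603.25601 — 2 statements merged into one kernel-verified Lean document; each statement's English description precedes it below -/
import Mathlib

section
/- Let n, k be natural numbers and let φ : ℝⁿ × ℝᵏ → ℝ be twice continuously differentiable. Let F : ℝⁿ × ℝᵏ → ℝᵏ denote the partial gradient of φ in the θ-variables, F(x,θ) = ∂φ/∂θ(x,θ), and let j : ℝⁿ × ℝᵏ → ℝⁿ × ℝⁿ be the map j(x,θ) = (x, ∂φ/∂x(x,θ)). Fix a point (x₀,θ₀) with F(x₀,θ₀) = 0 (a point of the critical set C_φ). Then for any two vectors u, u' in the kernel of the Fréchet derivative of F at (x₀,θ₀) (the tangent space to C_φ), one has ω(Dj(x₀,θ₀)(u), Dj(x₀,θ₀)(u')) = 0, where Dj(x₀,θ₀) is the Fréchet derivative of j at (x₀,θ₀). (In other words, the image of the critical set of a phase function under the lagrangian map is isotropic for the symplectic form.) -/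
/-!
Write `B` for the Hessian of `φ` at `p₀`. Then `Dj(p₀) u = (u₁, ∇ₓ(B u))` and `DF(p₀) u = ∇_θ(B u)`,
where `∇ₓ`, `∇_θ` turn a covector on `ℝⁿ × ℝᵏ` into the Riesz vectors of its two restrictions.
If `DF(p₀) u = 0`, the covector `B u` vanishes on `0 × ℝᵏ`, so `⟪∇ₓ(B u), u'₁⟫ = B u u'`.
Hence `ω(Dj u, Dj u') = B u u' - B u' u`, which vanishes because the Hessian is symmetric.
-/

/-- The standard symplectic bilinear form on `ℝⁿ × ℝⁿ`:
`ω((a,b),(c,d)) = ⟨b, c⟩ − ⟨a, d⟩`. -/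
noncomputable def symplecticForm (n : ℕ)
    (v w : EuclideanSpace ℝ (Fin n) × EuclideanSpace ℝ (Fin n)) : ℝ :=
  (inner ℝ v.2 w.1 : ℝ) - (inner ℝ v.1 w.2 : ℝ)

open InnerProductSpace ContinuousLinearMap

section PartialGradient

variable {X Y : Type*} [NormedAddCommGroup X] [InnerProductSpace ℝ X]
  [NormedAddCommGroup Y] [InnerProductSpace ℝ Y]

noncomputable def partialGradFst [CompleteSpace X] : (X × Y →L[ℝ] ℝ) →L[ℝ] X :=
  (toDual ℝ X).symm.toContinuousLinearEquiv.toContinuousLinearMap ∘L precomp ℝ (inl ℝ X Y)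

noncomputable def partialGradSnd [CompleteSpace Y] : (X × Y →L[ℝ] ℝ) →L[ℝ] Y :=
  (toDual ℝ Y).symm.toContinuousLinearEquiv.toContinuousLinearMap ∘L precomp ℝ (inr ℝ X Y)

theorem inner_partialGradFst [CompleteSpace X] (ℓ : X × Y →L[ℝ] ℝ) (x : X) :
    inner ℝ (partialGradFst ℓ) x = ℓ (x, 0) :=
  toDual_symm_apply

theorem partialGradSnd_eq_zero_iff [CompleteSpace Y] (ℓ : X × Y →L[ℝ] ℝ) :
    partialGradSnd ℓ = 0 ↔ ∀ y : Y, ℓ (0, y) = 0 := by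
  simp [partialGradSnd, ContinuousLinearMap.ext_iff]

theorem inner_partialGradFst_of_partialGradSnd_eq_zero [CompleteSpace X] [CompleteSpace Y]
    {ℓ : X × Y →L[ℝ] ℝ} (hℓ : partialGradSnd ℓ = 0) (v : X × Y) :
    inner ℝ (partialGradFst ℓ) v.1 = ℓ v := by
  rw [inner_partialGradFst, ← add_zero (ℓ (v.1, 0)), ← (partialGradSnd_eq_zero_iff ℓ).1 hℓ v.2,
    ← map_add, Prod.mk_add_mk, add_zero, zero_add]

variable {f : X × Y → ℝ} {p : X × Y}

theorem gradient_comp_prodMk_left [CompleteSpace X] (hf : DifferentiableAt ℝ f p) :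
    gradient (fun x => f (x, p.2)) p.1 = partialGradFst (fderiv ℝ f p) := by
  have h : HasFDerivAt (fun x => f (x, p.2)) (fderiv ℝ f p ∘L inl ℝ X Y) p.1 :=
    hf.hasFDerivAt.comp p.1 (hasFDerivAt_prodMk_left p.1 p.2)
  rw [gradient, h.fderiv]
  rfl

theorem gradient_comp_prodMk_right [CompleteSpace Y] (hf : DifferentiableAt ℝ f p) :
    gradient (fun y => f (p.1, y)) p.2 = partialGradSnd (fderiv ℝ f p) := by
  have h : HasFDerivAt (fun y => f (p.1, y)) (fderiv ℝ f p ∘L inr ℝ X Y) p.2 :=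
    hf.hasFDerivAt.comp p.2 (hasFDerivAt_prodMk_right p.1 p.2)
  rw [gradient, h.fderiv]
  rfl

theorem hasFDerivAt_gradient_comp_prodMk_left [CompleteSpace X] (hf : Differentiable ℝ f)
    (hf' : DifferentiableAt ℝ (fderiv ℝ f) p) :
    HasFDerivAt (fun q => gradient (fun x => f (x, q.2)) q.1)
      (partialGradFst ∘L fderiv ℝ (fderiv ℝ f) p) p := by
  rw [funext fun q => gradient_comp_prodMk_left (hf q)]
  -- unification alone does not match the normed instances of the inner product spaces here
  exact HasFDerivAt.comp (𝕜 := ℝ) (E := X × Y) (F := X × Y →L[ℝ] ℝ) (G := X) p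
    (partialGradFst (X := X) (Y := Y)).hasFDerivAt hf'.hasFDerivAt

theorem hasFDerivAt_gradient_comp_prodMk_right [CompleteSpace Y] (hf : Differentiable ℝ f)
    (hf' : DifferentiableAt ℝ (fderiv ℝ f) p) :
    HasFDerivAt (fun q => gradient (fun y => f (q.1, y)) q.2)
      (partialGradSnd ∘L fderiv ℝ (fderiv ℝ f) p) p := by
  rw [funext fun q => gradient_comp_prodMk_right (hf q)]
  exact HasFDerivAt.comp (𝕜 := ℝ) (E := X × Y) (F := X × Y →L[ℝ] ℝ) (G := Y) p
    (partialGradSnd (X := X) (Y := Y)).hasFDerivAt hf'.hasFDerivAt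

end PartialGradient

theorem critical_set_image_isotropic_general (n k : ℕ)
    (φ : EuclideanSpace ℝ (Fin n) × EuclideanSpace ℝ (Fin k) → ℝ)
    (hφ : ContDiff ℝ 2 φ)
    (F : EuclideanSpace ℝ (Fin n) × EuclideanSpace ℝ (Fin k) →
      EuclideanSpace ℝ (Fin k))
    (hF : ∀ p, F p = gradient (fun θ => φ (p.1, θ)) p.2)
    (j : EuclideanSpace ℝ (Fin n) × EuclideanSpace ℝ (Fin k) →
      EuclideanSpace ℝ (Fin n) × EuclideanSpace ℝ (Fin n))
    (hj : ∀ p, j p = (p.1, gradient (fun x => φ (x, p.2)) p.1))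
    (p₀ : EuclideanSpace ℝ (Fin n) × EuclideanSpace ℝ (Fin k))
    (u u' : EuclideanSpace ℝ (Fin n) × EuclideanSpace ℝ (Fin k))
    (hu : u ∈ LinearMap.ker (fderiv ℝ F p₀).toLinearMap)
    (hu' : u' ∈ LinearMap.ker (fderiv ℝ F p₀).toLinearMap) :
    symplecticForm n (fderiv ℝ j p₀ u) (fderiv ℝ j p₀ u') = 0 := by
  have hφ₁ : Differentiable ℝ φ := hφ.differentiable (by norm_num)
  have hφ₂ : DifferentiableAt ℝ (fderiv ℝ φ) p₀ :=
    (hφ.fderiv_right (m := 1) (by norm_num)).differentiable one_ne_zero p₀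
  set B := fderiv ℝ (fderiv ℝ φ) p₀
  have hB : ∀ v w, B v w = B w v := hφ.contDiffAt.isSymmSndFDerivAt (by simp)
  have hDF : fderiv ℝ F p₀ = partialGradSnd ∘L B := by
    rw [funext hF]; exact (hasFDerivAt_gradient_comp_prodMk_right hφ₁ hφ₂).fderiv
  have hDj : fderiv ℝ j p₀ = (fst ℝ _ _).prod (partialGradFst ∘L B) := by
    rw [funext hj]
    exact (hasFDerivAt_fst.prodMk (hasFDerivAt_gradient_comp_prodMk_left hφ₁ hφ₂)).fderiv
  have hBu : partialGradSnd (B u) = 0 := by simpa [hDF] using hu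
  have hBu' : partialGradSnd (B u') = 0 := by simpa [hDF] using hu'
  rw [hDj]
  simp only [symplecticForm, prod_apply, coe_fst', comp_apply]
  rw [inner_partialGradFst_of_partialGradSnd_eq_zero hBu, real_inner_comm,
    inner_partialGradFst_of_partialGradSnd_eq_zero hBu', hB, sub_self]

/-- For a `C²` phase function `φ(x,θ)`, at a point of the critical set
`C_φ = {∂φ/∂θ = 0}`, the image of the tangent space to `C_φ` (the kernel of
the derivative of `F = ∂φ/∂θ`) under the derivative of the lagrangian map
`j(x,θ) = (x, ∂φ/∂x(x,θ))` is isotropic for the standard symplectic form. -/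
theorem critical_set_image_isotropic (n k : ℕ)
    (φ : EuclideanSpace ℝ (Fin n) × EuclideanSpace ℝ (Fin k) → ℝ)
    (hφ : ContDiff ℝ 2 φ)
    (F : EuclideanSpace ℝ (Fin n) × EuclideanSpace ℝ (Fin k) →
      EuclideanSpace ℝ (Fin k))
    (hF : ∀ p, F p = gradient (fun θ => φ (p.1, θ)) p.2)
    (j : EuclideanSpace ℝ (Fin n) × EuclideanSpace ℝ (Fin k) →
      EuclideanSpace ℝ (Fin n) × EuclideanSpace ℝ (Fin n))
    (hj : ∀ p, j p = (p.1, gradient (fun x => φ (x, p.2)) p.1))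
    (p₀ : EuclideanSpace ℝ (Fin n) × EuclideanSpace ℝ (Fin k))
    (hp₀ : F p₀ = 0)
    (u u' : EuclideanSpace ℝ (Fin n) × EuclideanSpace ℝ (Fin k))
    (hu : u ∈ LinearMap.ker (fderiv ℝ F p₀).toLinearMap)
    (hu' : u' ∈ LinearMap.ker (fderiv ℝ F p₀).toLinearMap) :
    symplecticForm n (fderiv ℝ j p₀ u) (fderiv ℝ j p₀ u') = 0 :=
  critical_set_image_isotropic_general n k φ hφ F hF j hj p₀ u u' hu hu'
end

section
/- Let V : ℝ → ℝ be twice continuously differentiable, E ∈ ℝ, and let α < β be reals with V(x) < E for all x ∈ [α,β] (no turning points in [α,β]). Define φ(x) = ∫_α^x √(2(E − V(t))) dt and a(x) = (2(E − V(x)))^{−1/4} for x ∈ [α,β]. Then φ solves the eikonal equation (φ')²/2 + V = E, a solves the transport equation φ'a' + (1/2)φ''a = 0 on [α,β], and there exists a constant C ≥ 0 (one may take C = (1/2)·sup_{x∈[α,β]} |a''(x)|) such that for every ℏ ∈ (0,1] the WKB function ψ_ℏ(x) = a(x)·exp(i·φ(x)/ℏ) satisfies |−(ℏ²/2)·ψ_ℏ''(x)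 + (V(x) − E)·ψ_ℏ(x)| ≤ C·ℏ² for all x ∈ [α,β]. That is, ψ_ℏ is a WKB quasimode of order 2 for the Schrödinger operator on [α,β]. -/
/-!
Writing `ψ = a e^{iφ/ℏ}`, the Schrödinger residual expands as
`e^{iφ/ℏ} ((φ'²/2 + V - E) a - iℏ (φ' a' + φ'' a / 2) - (ℏ²/2) a'')`.
The phase `φ' = √(2(E - V))` kills the `ℏ⁰` term. The flux `a² φ'` is identically `1`, and
differentiating it gives `2a (φ' a' + φ'' a / 2) = 0` with `a ≠ 0`, which kills the `ℏ¹` term.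
What remains has norm `(ℏ²/2) |a''|`, and `a''` is bounded on the compact `[α, β]` because
`a` is `C²` on the open set `{V < E}`.
-/

open Real Set

section

open Complex Filter Topology

theorem ContDiffOn.eventually_differentiableAt {f : ℝ → ℝ} {U : Set ℝ} {x : ℝ}
    (hf : ContDiffOn ℝ 2 f U) (hU : IsOpen U) (hx : x ∈ U) :
    ∀ᶠ y in 𝓝 x, DifferentiableAt ℝ f y :=
  eventually_of_mem (hU.mem_nhds hx) fun _ hy =>
    (hf.differentiableOn two_ne_zero).differentiableAt (hU.mem_nhds hy)

theorem ContDiffOn.differentiableAt_deriv {f : ℝ → ℝ} {U : Set ℝ} {x : ℝ}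
    (hf : ContDiffOn ℝ 2 f U) (hU : IsOpen U) (hx : x ∈ U) : DifferentiableAt ℝ (deriv f) x :=
  ((hf.deriv_of_isOpen hU (m := 1) (by norm_num)).differentiableOn one_ne_zero).differentiableAt
    (hU.mem_nhds hx)

theorem contDiffOn_intervalIntegral {f : ℝ → ℝ} {U : Set ℝ} {n : ℕ} (α : ℝ) (hf : Continuous f)
    (hU : IsOpen U) (hfU : ContDiffOn ℝ n f U) :
    ContDiffOn ℝ (n + 1) (fun x => ∫ t in α..x, f t) U := by
  refine (contDiffOn_succ_iff_deriv_of_isOpen hU).2 ⟨fun x _ => ?_, by simp, ?_⟩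
  · exact (hf.integral_hasStrictDerivAt α x).hasDerivAt.differentiableAt.differentiableWithinAt
  · rwa [show deriv (fun x => ∫ t in α..x, f t) = f from funext (hf.deriv_integral f α)]

theorem hasDerivAt_ofReal_mul_cexp {a φ : ℝ → ℝ} {a' φ' x : ℝ} (k : ℂ)
    (ha : HasDerivAt a a' x) (hφ : HasDerivAt φ φ' x) :
    HasDerivAt (fun y => (a y : ℂ) * exp (k * φ y)) ((a' + k * a x * φ') * exp (k * φ x)) x :=
  (ha.ofReal_comp.fun_mul (hφ.ofReal_comp.const_mul k).cexp).congr_deriv (by ring)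

theorem deriv_deriv_ofReal_mul_cexp {a φ : ℝ → ℝ} {x : ℝ} (k : ℂ)
    (ha : ∀ᶠ y in 𝓝 x, DifferentiableAt ℝ a y) (hφ : ∀ᶠ y in 𝓝 x, DifferentiableAt ℝ φ y)
    (ha' : DifferentiableAt ℝ (deriv a) x) (hφ' : DifferentiableAt ℝ (deriv φ) x) :
    deriv (deriv fun y => (a y : ℂ) * exp (k * φ y)) x =
      (deriv (deriv a) x + k * (2 * deriv a x * deriv φ x + a x * deriv (deriv φ) x)
        + k ^ 2 * a x * deriv φ x ^ 2) * exp (k * φ x) := by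
  have hψ' : deriv (fun y => (a y : ℂ) * exp (k * φ y)) =ᶠ[𝓝 x]
      fun y => (deriv a y + k * a y * deriv φ y) * exp (k * φ y) := by
    filter_upwards [ha, hφ] with y hay hφy
    exact (hasDerivAt_ofReal_mul_cexp k hay.hasDerivAt hφy.hasDerivAt).deriv
  rw [hψ'.deriv_eq]
  have hamp : HasDerivAt (fun y => ↑(deriv a y) + k * a y * deriv φ y)
      (deriv (deriv a) x + k * (deriv a x * deriv φ x + a x * deriv (deriv φ) x)) x :=
    (ha'.hasDerivAt.ofReal_comp.fun_add ((ha.self_of_nhds.hasDerivAt.ofReal_comp.const_mul k).fun_mul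
      hφ'.hasDerivAt.ofReal_comp)).congr_deriv (by ring)
  have hexp : HasDerivAt (fun y => exp (k * φ y)) (exp (k * φ x) * (k * deriv φ x)) x :=
    (hφ.self_of_nhds.hasDerivAt.ofReal_comp.const_mul k).cexp
  rw [(hamp.fun_mul hexp).deriv]
  ring

theorem schrodinger_ofReal_mul_cexp_eq {a φ V : ℝ → ℝ} {U : Set ℝ} {E ℏ x : ℝ} (hℏ : ℏ ≠ 0)
    (ha : ContDiffOn ℝ 2 a U) (hφ : ContDiffOn ℝ 2 φ U) (hU : IsOpen U) (hx : x ∈ U) :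
    -((ℏ : ℂ) ^ 2 / 2) * deriv (deriv fun y => (a y : ℂ) * exp (I * φ y / ℏ)) x
        + ((V x : ℂ) - E) * ((a x : ℂ) * exp (I * φ x / ℏ)) =
      exp (I * φ x / ℏ) * (-((ℏ : ℂ) ^ 2 / 2) * deriv (deriv a) x
        - I * ℏ * (deriv φ x * deriv a x + 1 / 2 * deriv (deriv φ) x * a x)
        + (↑(deriv φ x) ^ 2 / 2 + V x - E) * a x) := by
  have hk (y : ℝ) : I * φ y / ℏ = I / ℏ * φ y := by ring
  simp only [hk]
  rw [deriv_deriv_ofReal_mul_cexp (I / ℏ) (ha.eventually_differentiableAt hU hx)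
    (hφ.eventually_differentiableAt hU hx) (ha.differentiableAt_deriv hU hx)
    (hφ.differentiableAt_deriv hU hx)]
  have hℏk : (ℏ : ℂ) * (I / ℏ) = I := mul_div_cancel₀ _ (ofReal_ne_zero.mpr hℏ)
  set e := exp (I / ℏ * φ x)
  set T : ℂ := deriv φ x * deriv a x + 1 / 2 * deriv (deriv φ) x * a x
  linear_combination e * (-T * ℏ - a x * deriv φ x ^ 2 / 2 * (ℏ * (I / ℏ) + I)) * hℏk
    - e * a x * deriv φ x ^ 2 / 2 * I_sq

theorem norm_schrodinger_ofReal_mul_cexp_eq {a φ V : ℝ → ℝ} {U : Set ℝ} {E ℏ x : ℝ} (hℏ : ℏ ≠ 0)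
    (ha : ContDiffOn ℝ 2 a U) (hφ : ContDiffOn ℝ 2 φ U) (hU : IsOpen U) (hx : x ∈ U)
    (heik : deriv φ x ^ 2 / 2 + V x = E)
    (htr : deriv φ x * deriv a x + 1 / 2 * deriv (deriv φ) x * a x = 0) :
    ‖-((ℏ : ℂ) ^ 2 / 2) * deriv (deriv fun y => (a y : ℂ) * exp (I * φ y / ℏ)) x
        + ((V x : ℂ) - E) * ((a x : ℂ) * exp (I * φ x / ℏ))‖ = ℏ ^ 2 / 2 * |deriv (deriv a) x| := by
  have htrC : (↑(deriv φ x) * ↑(deriv a x) + 1 / 2 * ↑(deriv (deriv φ) x) * ↑(a x) : ℂ) = 0 := by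
    simpa using congrArg ofReal htr
  have heikC : (↑(deriv φ x) ^ 2 / 2 + V x - E : ℂ) = 0 := by
    rw [← heik]; push_cast; ring
  rw [schrodinger_ofReal_mul_cexp_eq hℏ ha hφ hU hx, htrC, heikC]
  simp [norm_exp]

theorem transport_of_eventuallyEq_sq_mul_deriv {a φ : ℝ → ℝ} {x c : ℝ}
    (ha : DifferentiableAt ℝ a x) (hφ' : DifferentiableAt ℝ (deriv φ) x) (hax : a x ≠ 0)
    (hflux : (fun y => a y ^ 2 * deriv φ y) =ᶠ[𝓝 x] fun _ => c) :
    deriv φ x * deriv a x + 1 / 2 * deriv (deriv φ) x * a x = 0 := by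
  have h := ((ha.hasDerivAt.fun_pow 2).fun_mul hφ'.hasDerivAt).deriv
  rw [hflux.deriv_eq, deriv_const] at h
  have : a x * (2 * (deriv φ x * deriv a x + 1 / 2 * deriv (deriv φ) x * a x)) = 0 := by
    linear_combination -h
  simpa [hax] using this

theorem rpow_neg_quarter_sq_mul_sqrt {s : ℝ} (hs : 0 < s) : (s ^ (-(1 / 4 : ℝ))) ^ 2 * √s = 1 := by
  rw [sqrt_eq_rpow, ← rpow_natCast, ← rpow_mul hs.le, ← rpow_add hs]
  norm_num

end

section

variable {V : ℝ → ℝ} {E : ℝ}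

theorem contDiffOn_two_mul_sub_rpow {n : WithTop ℕ∞} (hV : ContDiff ℝ n V) (p : ℝ) :
    ContDiffOn ℝ n (fun x => (2 * (E - V x)) ^ p) {x | V x < E} :=
  (contDiff_const.mul (contDiff_const.sub hV)).contDiffOn.rpow_const_of_ne
    fun _ hx => (mul_pos two_pos (sub_pos.2 hx)).ne'

theorem contDiffOn_intervalIntegral_sqrt_two_mul_sub (hV : ContDiff ℝ 1 V) (α : ℝ) :
    ContDiffOn ℝ 2 (fun x => ∫ t in α..x, √(2 * (E - V t))) {x | V x < E} := by
  have hsqrt : ContDiffOn ℝ 1 (fun x => √(2 * (E - V x))) {x | V x < E} :=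
    (contDiff_const.mul (contDiff_const.sub hV)).contDiffOn.sqrt
      fun _ hx => (mul_pos two_pos (sub_pos.2 hx)).ne'
  exact contDiffOn_intervalIntegral (n := 1) α (by fun_prop)
    (isOpen_lt hV.continuous continuous_const) hsqrt

end

/-- Away from turning points (`V < E` on `[α,β]`), the phase
`φ(x) = ∫_α^x √(2(E−V))` solves the eikonal equation, the amplitude
`a = (2(E−V))^{−1/4}` solves the transport equation, and the WKB function
`ψ_ℏ = a·e^{iφ/ℏ}` is a quasimode of order `2` for the Schrödinger operator,
uniformly for `ℏ ∈ (0,1]`. -/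
theorem wkb_quasimode_away_from_turning_points
    (V : ℝ → ℝ) (hV : ContDiff ℝ 2 V) (E α β : ℝ) (hαβ : α < β)
    (hE : ∀ x ∈ Icc α β, V x < E)
    (φ : ℝ → ℝ) (hφdef : ∀ x : ℝ, φ x = ∫ t in α..x, Real.sqrt (2 * (E - V t)))
    (a : ℝ → ℝ) (hadef : ∀ x : ℝ, a x = (2 * (E - V x)) ^ (-(1/4 : ℝ))) :
    (∀ x ∈ Icc α β, (deriv φ x)^2 / 2 + V x = E) ∧
    (∀ x ∈ Icc α β, deriv φ x * deriv a x + (1/2) * deriv (deriv φ) x * a x = 0) ∧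
    (∃ C : ℝ, 0 ≤ C ∧ ∀ ℏ ∈ Ioc (0:ℝ) 1, ∀ x ∈ Icc α β,
      ‖(-((ℏ : ℂ)^2 / 2) *
            deriv (deriv (fun y : ℝ =>
              (a y : ℂ) * Complex.exp (Complex.I * (φ y : ℂ) / (ℏ : ℂ)))) x
          + ((V x : ℂ) - (E : ℂ)) *
              ((a x : ℂ) * Complex.exp (Complex.I * (φ x : ℂ) / (ℏ : ℂ))))‖
        ≤ C * ℏ^2) := by
  have hU : IsOpen {x | V x < E} := isOpen_lt hV.continuous continuous_const
  have hpos : ∀ x, V x < E → 0 < 2 * (E - V x) := fun _ hx => mul_pos two_pos (sub_pos.2 hx)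
  have hdφ : deriv φ = fun x => √(2 * (E - V x)) :=
    funext hφdef ▸ funext ((by fun_prop : Continuous fun t => √(2 * (E - V t))).deriv_integral _ α)
  have ha : ContDiffOn ℝ 2 a {x | V x < E} := funext hadef ▸ contDiffOn_two_mul_sub_rpow hV _
  have hφ : ContDiffOn ℝ 2 φ {x | V x < E} :=
    funext hφdef ▸ contDiffOn_intervalIntegral_sqrt_two_mul_sub (hV.of_le one_le_two) α
  have eikonal : ∀ x ∈ Icc α β, (deriv φ x) ^ 2 / 2 + V x = E := fun x hx => by
    rw [hdφ, sq_sqrt (hpos x (hE x hx)).le]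
    ring
  have transport : ∀ x ∈ Icc α β,
      deriv φ x * deriv a x + (1 / 2) * deriv (deriv φ) x * a x = 0 := fun x hx =>
    transport_of_eventuallyEq_sq_mul_deriv (c := 1)
      ((ha.eventually_differentiableAt hU (hE x hx)).self_of_nhds)
      (hφ.differentiableAt_deriv hU (hE x hx))
      (by rw [hadef]; exact (rpow_pos_of_pos (hpos x (hE x hx)) _).ne')
      (Filter.eventually_of_mem (hU.mem_nhds (hE x hx)) fun y hy => by
        simp only [hadef, hdφ, rpow_neg_quarter_sq_mul_sqrt (hpos y hy)])
  obtain ⟨M, hM⟩ := isCompact_Icc.exists_bound_of_continuousOn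
    (((ha.deriv_of_isOpen hU (m := 1) (by norm_num)).continuousOn_deriv_of_isOpen hU le_rfl).mono hE)
  refine ⟨eikonal, transport, M / 2, by linarith [(norm_nonneg _).trans (hM α ⟨le_rfl, hαβ.le⟩)],
    fun ℏ hℏ x hx => ?_⟩
  rw [norm_schrodinger_ofReal_mul_cexp_eq hℏ.1.ne' ha hφ hU (hE x hx) (eikonal x hx) (transport x hx)]
  calc ℏ ^ 2 / 2 * |deriv (deriv a) x| ≤ ℏ ^ 2 / 2 * M := by gcongr; exact hM x hx
    _ = M / 2 * ℏ ^ 2 := by ring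
end
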